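/- Let Δ be a finite nonempty pure simplicial complex all of whose facets have cardinality n. Then the impartial strong placement game G(Δ) is equivalent to 0 if n is even and equivalent to * if n is odd. -/

import Mathlib

/-! The link of a vertex in a pure complex with facets of size `n + 1` is pure with facets of
size `n`, and a nonempty such complex has a vertex. For even `n` the second player wins by
answering any move `v` with a vertex of the link of `v`, which leaves a pure complex with facets
of size `n - 2`. For odd `n` every move leads to a link with facets of even size, hence to a game
equivalent to `0`, and a game whose options are all equivalent to `0` is `*`. -/

universe u

namespace SetTheory

/-- Pre-games (formerly `SetTheory.PGame` in Mathlib, since removed): a game is given by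
types of left and right moves and the resulting games. -/
inductive PGame : Type (u + 1)
  | mk : ∀ α β : Type u, (α → PGame) → (β → PGame) → PGame

namespace PGame

/-- The pair `(x ≤ y, x ⧏ y)`, by recursion on `x` and then on `y`, as in the former Mathlib:
`x ≤ y ↔ (∀ i, xL i ⧏ y) ∧ (∀ j, x ⧏ yR j)` and
`x ⧏ y ↔ (∃ j, x ≤ yL j) ∨ (∃ i, xR i ≤ y)`. -/
noncomputable def leLF : PGame.{u} → PGame.{u} → Prop × Prop :=
  fun x => PGame.rec (motive := fun _ => PGame.{u} → Prop × Prop)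
    (fun xl xr xL xR IHL IHR => fun y =>
      PGame.rec (motive := fun _ => Prop × Prop)
        (fun yl yr yL yR JHL JHR =>
          ((∀ i, (IHL i (mk yl yr yL yR)).2) ∧ ∀ j, (JHR j).2,
            (∃ j, (JHL j).1) ∨ ∃ i, (IHR i (mk yl yr yL yR)).1)) y) x

/-- The order on pre-games (formerly `SetTheory.PGame.le`). -/
noncomputable instance : LE PGame.{u} :=
  ⟨fun x y => (leLF x y).1⟩

/-- Equivalence of pre-games (formerly `SetTheory.PGame.Equiv`): `x ≤ y ∧ y ≤ x`. -/
instance : HasEquiv PGame.{u} :=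
  ⟨fun x y => x ≤ y ∧ y ≤ x⟩

/-- The pre-game `0 = {|}`. -/
instance : Zero PGame.{u} :=
  ⟨⟨PEmpty, PEmpty, PEmpty.elim, PEmpty.elim⟩⟩

/-- The pre-game `star = {0|0}`. -/
def star : PGame.{u} :=
  ⟨PUnit, PUnit, fun _ => 0, fun _ => 0⟩

end PGame

end SetTheory

open SetTheory PGame
open scoped PGame

variable {V : Type} [DecidableEq V]

/-- A (finite) simplicial complex: a downward-closed family of finite sets of vertices. -/
def IsComplex (Δ : Finset (Finset V)) : Prop :=
  ∀ F ∈ Δ, ∀ F' ⊆ F, F' ∈ Δ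

/-- `F` is a facet (maximal face) of `Δ`. -/
def IsFacet (Δ : Finset (Finset V)) (F : Finset V) : Prop :=
  F ∈ Δ ∧ ∀ F' ∈ Δ, F ⊆ F' → F = F'

/-- The link of a vertex `v` in `Δ`: faces `F` with `v ∉ F` and `F ∪ {v} ∈ Δ`. -/
def linkC (Δ : Finset (Finset V)) (v : V) : Finset (Finset V) :=
  Δ.filter fun F => v ∉ F ∧ insert v F ∈ Δ

theorem linkC_sup_lt (Δ : Finset (Finset V)) (v : V) (hv : {v} ∈ Δ) :
    (linkC Δ v).sup Finset.card < Δ.sup Finset.card := by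
  have h1 : (1 : ℕ) ≤ Δ.sup Finset.card := by
    simpa using Finset.le_sup (f := Finset.card) hv
  refine (Finset.sup_lt_iff (by simp only [bot_eq_zero]; omega)).2 ?_
  intro F hF
  simp only [linkC, Finset.mem_filter] at hF
  obtain ⟨-, hvF, hins⟩ := hF
  have h2 := Finset.le_sup (f := Finset.card) hins
  rw [Finset.card_insert_of_notMem hvF] at h2
  omega

/-- The impartial strong placement game of a simplicial complex: both players' moves are to
the links of the vertices of `Δ`. -/
def SPGame (Δ : Finset (Finset V)) : PGame :=
  ⟨{v : V // {v} ∈ Δ}, {v : V // {v} ∈ Δ},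
    fun v => SPGame (linkC Δ v.1), fun v => SPGame (linkC Δ v.1)⟩
termination_by Δ.sup Finset.card
decreasing_by all_goals exact linkC_sup_lt Δ v.1 v.2

namespace SetTheory.PGame

def LF (x y : PGame.{u}) : Prop := (leLF x y).2

infixl:50 " ⧏ " => LF

theorem mk_le_mk {xl xr yl yr : Type u} {xL : xl → PGame} {xR : xr → PGame}
    {yL : yl → PGame} {yR : yr → PGame} (hL : ∀ i, xL i ⧏ mk yl yr yL yR)
    (hR : ∀ j, mk xl xr xL xR ⧏ yR j) : mk xl xr xL xR ≤ mk yl yr yL yR :=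
  ⟨hL, hR⟩

theorem lf_mk_of_le_moveLeft {x : PGame.{u}} {yl yr : Type u} {yL : yl → PGame}
    {yR : yr → PGame} (j : yl) (h : x ≤ yL j) : x ⧏ mk yl yr yL yR := by
  cases x
  exact Or.inl ⟨j, h⟩

theorem mk_lf_of_moveRight_le {xl xr : Type u} {xL : xl → PGame} {xR : xr → PGame}
    {y : PGame.{u}} (i : xr) (h : xR i ≤ y) : mk xl xr xL xR ⧏ y := by
  cases y
  exact Or.inr ⟨i, h⟩

variable {ι : Type u} {f : ι → PGame.{u}}

theorem mk_equiv_zero {κ : ι → Type u} {g : ∀ i, κ i → PGame.{u}}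
    (hf : ∀ i, f i = mk (κ i) (κ i) (g i) (g i)) (hg : ∀ i, ∃ k, g i k ≈ 0) :
    mk ι ι f f ≈ 0 := by
  refine ⟨mk_le_mk (fun i => ?_) (fun j => j.elim), mk_le_mk (fun j => j.elim) fun i => ?_⟩ <;>
    obtain ⟨k, hk⟩ := hg i <;> rw [hf i]
  · exact mk_lf_of_moveRight_le k hk.1
  · exact lf_mk_of_le_moveLeft k hk.2

theorem mk_equiv_star [Nonempty ι] (hf : ∀ i, f i ≈ 0) : mk ι ι f f ≈ star := by
  obtain ⟨i₀⟩ := ‹Nonempty ι›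
  exact ⟨mk_le_mk (fun i => lf_mk_of_le_moveLeft .unit (hf i).1)
      fun _ => mk_lf_of_moveRight_le i₀ (hf i₀).1,
    mk_le_mk (fun _ => lf_mk_of_le_moveLeft i₀ (hf i₀).2)
      fun i => mk_lf_of_moveRight_le .unit (hf i).2⟩

end SetTheory.PGame

def IsPure (Δ : Finset (Finset V)) (n : ℕ) : Prop :=
  ∀ F : Finset V, IsFacet Δ F → F.card = n

variable {Δ : Finset (Finset V)}

theorem exists_isFacet_superset {F : Finset V} (hF : F ∈ Δ) :
    ∃ G, IsFacet Δ G ∧ F ⊆ G := by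
  obtain ⟨G, hG, hmax⟩ :=
    Finset.exists_max_image (Δ.filter (F ⊆ ·)) Finset.card ⟨F, by simp [hF]⟩
  rw [Finset.mem_filter] at hG
  refine ⟨G, ⟨hG.1, fun F' hF' hsub => Finset.eq_of_subset_of_card_le hsub ?_⟩, hG.2⟩
  exact hmax F' (Finset.mem_filter.2 ⟨hF', hG.2.trans hsub⟩)

theorem isComplex_linkC (hΔ : IsComplex Δ) (v : V) : IsComplex (linkC Δ v) := by
  intro F hF F' hF'
  simp only [linkC, Finset.mem_filter] at hF ⊢
  obtain ⟨hFΔ, hvF, hins⟩ := hF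
  exact ⟨hΔ F hFΔ F' hF', fun hvF' => hvF (hF' hvF'),
    hΔ _ hins _ (Finset.insert_subset_insert v hF')⟩

theorem IsComplex.linkC_nonempty (hΔ : IsComplex Δ) {v : V} (hv : {v} ∈ Δ) :
    (linkC Δ v).Nonempty :=
  ⟨∅, Finset.mem_filter.2 ⟨hΔ _ hv _ (Finset.empty_subset _), Finset.notMem_empty v, hv⟩⟩

theorem IsComplex.exists_singleton_mem (hΔ : IsComplex Δ) (hne : Δ.Nonempty) {n : ℕ}
    (hpure : IsPure Δ (n + 1)) : ∃ v, {v} ∈ Δ := by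
  obtain ⟨F, hF⟩ := hne
  obtain ⟨G, hG, -⟩ := exists_isFacet_superset hF
  obtain ⟨v, hvG⟩ : G.Nonempty := Finset.card_pos.1 (by rw [hpure G hG]; omega)
  exact ⟨v, hΔ G hG.1 {v} (Finset.singleton_subset_iff.2 hvG)⟩

theorem IsPure.singleton_notMem (hpure : IsPure Δ 0) (v : V) : {v} ∉ Δ := fun hv => by
  obtain ⟨G, hG, hsub⟩ := exists_isFacet_superset hv
  simp [Finset.card_eq_zero.1 (hpure G hG)] at hsub

theorem isPure_linkC (hΔ : IsComplex Δ) {n : ℕ} (hpure : IsPure Δ (n + 1)) (v : V) :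
    IsPure (linkC Δ v) n := by
  rintro F ⟨hF, hFmax⟩
  obtain ⟨-, hvF, hins⟩ := Finset.mem_filter.1 hF
  obtain ⟨G, hG, hsub⟩ := exists_isFacet_superset hins
  have hvG : v ∈ G := hsub (Finset.mem_insert_self v F)
  have hFG : F ⊆ G.erase v := fun x hx =>
    Finset.mem_erase.2 ⟨fun h => hvF (h ▸ hx), hsub (Finset.mem_insert_of_mem hx)⟩
  have herase : G.erase v ∈ linkC Δ v := Finset.mem_filter.2
    ⟨hΔ G hG.1 _ (Finset.erase_subset v G), Finset.notMem_erase v G,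
      (Finset.insert_erase hvG).symm ▸ hG.1⟩
  rw [hFmax _ herase hFG, Finset.card_erase_of_mem hvG, hpure G hG, Nat.add_sub_cancel]

theorem SPGame_eq (Δ : Finset (Finset V)) :
    SPGame Δ = mk {v : V // {v} ∈ Δ} {v : V // {v} ∈ Δ}
      (fun v => SPGame (linkC Δ v.1)) (fun v => SPGame (linkC Δ v.1)) := by
  rw [SPGame]

theorem IsComplex.SPGame_equiv_zero (k : ℕ) (hΔ : IsComplex Δ) (hpure : IsPure Δ (2 * k)) :
    SPGame Δ ≈ 0 := by
  induction k generalizing Δ with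
  | zero =>
    rw [SPGame_eq]
    exact mk_equiv_zero (fun _ => SPGame_eq _) fun v => (hpure.singleton_notMem v.1 v.2).elim
  | succ k ih =>
    rw [SPGame_eq]
    refine mk_equiv_zero (fun _ => SPGame_eq _) fun v => ?_
    have hΔv := isComplex_linkC hΔ v.1
    have hpure_v : IsPure (linkC Δ v.1) (2 * k + 1) := isPure_linkC hΔ hpure v.1
    obtain ⟨w, hw⟩ := hΔv.exists_singleton_mem (hΔ.linkC_nonempty v.2) hpure_v
    exact ⟨⟨w, hw⟩, ih (isComplex_linkC hΔv w) (isPure_linkC hΔv hpure_v w)⟩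

theorem IsComplex.SPGame_equiv_star (k : ℕ) (hΔ : IsComplex Δ) (hne : Δ.Nonempty)
    (hpure : IsPure Δ (2 * k + 1)) : SPGame Δ ≈ star := by
  obtain ⟨v, hv⟩ := hΔ.exists_singleton_mem hne hpure
  have : Nonempty {v : V // {v} ∈ Δ} := ⟨⟨v, hv⟩⟩
  rw [SPGame_eq]
  exact mk_equiv_star fun v =>
    (isComplex_linkC hΔ v.1).SPGame_equiv_zero k (isPure_linkC hΔ hpure v.1)

/-- If `Δ` is a nonempty pure simplicial complex all of whose facets have cardinality `n`,
then its impartial strong placement game is equivalent to `0` if `n` is even and to `*`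
if `n` is odd. -/
theorem spGame_of_pure (Δ : Finset (Finset V)) (n : ℕ) (hΔ : IsComplex Δ)
    (hne : Δ.Nonempty) (hpure : ∀ F : Finset V, IsFacet Δ F → F.card = n) :
    (Even n → SPGame Δ ≈ 0) ∧ (Odd n → SPGame Δ ≈ star) := by
  refine ⟨fun heven => ?_, fun ⟨k, hk⟩ => ?_⟩
  · obtain ⟨k, rfl⟩ := heven.two_dvd
    exact hΔ.SPGame_equiv_zero k hpure
  · subst hk
    exact hΔ.SPGame_equiv_star k hne hpure
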